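/- arXiv:1602.00223 — 2 statements merged into one kernel-verified Lean document; each statement's English description precedes it below -/
import Mathlib

section
/- Let 0 < α < 1, 0 < λ ≤ Λ, s, y ∈ ℝ^d with y ≠ 0, τ = sᵀy/‖y‖², λ‖s‖² ≤ sᵀy ≤ Λ‖s‖², 1/Λ ≤ τ ≤ 1/λ, and ‖s‖²/‖y‖² ≤ 1/λ². If sᵀy − ατ‖y‖² > 0, and u = (s − ατy)/√((s − ατy)ᵀy), then uᵀu ≤ Λ/(λ²(1−α)) − α(2−α)/((1−α)Λ). -/
open Matrix

/-!
Since `sᵀy = τ‖y‖²`, the vector `v = s − ατy` has `vᵀy = (1 − α)τ‖y‖²` and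
`vᵀv = ‖s‖² − α(2 − α)τ²‖y‖²`, so `uᵀu = vᵀv / vᵀy` equals
`(‖s‖²/‖y‖²)/((1 − α)τ) − α(2 − α)τ/(1 − α)`.
The first term is at most `Λ/(λ²(1 − α))` because `‖s‖²/‖y‖² ≤ 1/λ²` and `1/τ ≤ Λ`,
and the second is at most `−α(2 − α)/((1 − α)Λ)` because `τ ≥ 1/Λ`.
-/

section DotProduct

variable {n : Type*} [Fintype n]

theorem dotProduct_inv_sqrt_smul_self (v : n → ℝ) {a : ℝ} (ha : 0 ≤ a) :
    ((√a)⁻¹ • v) ⬝ᵥ ((√a)⁻¹ • v) = v ⬝ᵥ v / a := by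
  rw [smul_dotProduct, dotProduct_smul, smul_eq_mul, smul_eq_mul, ← mul_assoc, ← mul_inv,
    Real.mul_self_sqrt ha, inv_mul_eq_div]

theorem sub_smul_dotProduct_sub_smul {R : Type*} [CommRing R] (s y : n → R) (c : R) :
    (s - c • y) ⬝ᵥ (s - c • y) = s ⬝ᵥ s - 2 * c * (s ⬝ᵥ y) + c ^ 2 * (y ⬝ᵥ y) := by
  simp only [sub_dotProduct, dotProduct_sub, smul_dotProduct, dotProduct_smul, smul_eq_mul,
    dotProduct_comm y s]
  ring

end DotProduct

theorem div_sub_le_of_div_le_inv_sq {α lam Lam τ r : ℝ} (hα0 : 0 ≤ α) (hα1 : α < 1)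
    (hLam : 0 < Lam) (hτ : 1 / Lam ≤ τ) (hr : r ≤ 1 / lam ^ 2) :
    (r - α * (2 - α) * τ ^ 2) / ((1 - α) * τ) ≤
      Lam / (lam ^ 2 * (1 - α)) - α * (2 - α) / ((1 - α) * Lam) := by
  have hτ0 : 0 < τ := lt_of_lt_of_le (by positivity) hτ
  have h1α : 0 < 1 - α := by linarith
  have hinvτ : 1 / τ ≤ Lam := by rwa [div_le_iff₀ hτ0, ← div_le_iff₀' hLam]
  have hmain : r / τ ≤ Lam / lam ^ 2 :=
    calc r / τ = r * (1 / τ) := by ring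
      _ ≤ 1 / lam ^ 2 * Lam := mul_le_mul hr hinvτ (by positivity) (by positivity)
      _ = Lam / lam ^ 2 := by ring
  have hcorr : α * (2 - α) / Lam ≤ α * (2 - α) * τ := by
    rw [div_eq_mul_one_div]
    exact mul_le_mul_of_nonneg_left hτ (mul_nonneg hα0 (by linarith))
  calc (r - α * (2 - α) * τ ^ 2) / ((1 - α) * τ)
        = (r / τ - α * (2 - α) * τ) / (1 - α) := by field_simp
    _ ≤ (Lam / lam ^ 2 - α * (2 - α) / Lam) / (1 - α) := by gcongr
    _ = Lam / (lam ^ 2 * (1 - α)) - α * (2 - α) / ((1 - α) * Lam) := by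
      rw [sub_div, div_div, div_div, mul_comm Lam]

theorem stmt7_general {d : ℕ} (α lam Lam : ℝ) (hα0 : 0 < α) (hα1 : α < 1)
    (hlam : 0 < lam) (hlamLam : lam ≤ Lam)
    (s y : Fin d → ℝ) (hy : y ≠ 0) (τ : ℝ) (hτ : τ = (s ⬝ᵥ y) / (y ⬝ᵥ y))
    (hτ1 : 1 / Lam ≤ τ)
    (hss : (s ⬝ᵥ s) / (y ⬝ᵥ y) ≤ 1 / lam ^ 2)
    (u : Fin d → ℝ)
    (hu : u = (Real.sqrt ((s - (α * τ) • y) ⬝ᵥ y))⁻¹ • (s - (α * τ) • y)) :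
    u ⬝ᵥ u ≤ Lam / (lam ^ 2 * (1 - α)) - α * (2 - α) / ((1 - α) * Lam) := by
  have hLam : 0 < Lam := hlam.trans_le hlamLam
  have hY : 0 < y ⬝ᵥ y := by simpa using dotProduct_star_self_pos_iff.2 hy
  have hτ0 : 0 < τ := lt_of_lt_of_le (by positivity) hτ1
  have h1α : 0 < 1 - α := by linarith
  have hsy : s ⬝ᵥ y = τ * (y ⬝ᵥ y) := by rw [hτ, div_mul_cancel₀ _ hY.ne']
  have hvy : (s - (α * τ) • y) ⬝ᵥ y = (1 - α) * τ * (y ⬝ᵥ y) := by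
    rw [sub_dotProduct, smul_dotProduct, smul_eq_mul, hsy]; ring
  have huu : u ⬝ᵥ u =
      ((s ⬝ᵥ s) / (y ⬝ᵥ y) - α * (2 - α) * τ ^ 2) / ((1 - α) * τ) := by
    have hvy0 : 0 ≤ (s - (α * τ) • y) ⬝ᵥ y := hvy ▸ (mul_pos (mul_pos h1α hτ0) hY).le
    rw [hu, dotProduct_inv_sqrt_smul_self _ hvy0, sub_smul_dotProduct_sub_smul, hvy, hsy]
    field_simp
    ring
  rw [huu]
  exact div_sub_le_of_div_le_inv_sq hα0.le hα1 hLam hτ1 hss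

/-- bound on uᵀu for u = (s − ατy)/√((s − ατy)ᵀy). -/
theorem stmt7 {d : ℕ} (α lam Lam : ℝ) (hα0 : 0 < α) (hα1 : α < 1)
    (hlam : 0 < lam) (hlamLam : lam ≤ Lam)
    (s y : Fin d → ℝ) (hy : y ≠ 0) (τ : ℝ) (hτ : τ = (s ⬝ᵥ y) / (y ⬝ᵥ y))
    (hsy1 : lam * (s ⬝ᵥ s) ≤ s ⬝ᵥ y) (hsy2 : s ⬝ᵥ y ≤ Lam * (s ⬝ᵥ s))
    (hτ1 : 1 / Lam ≤ τ) (hτ2 : τ ≤ 1 / lam)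
    (hss : (s ⬝ᵥ s) / (y ⬝ᵥ y) ≤ 1 / lam ^ 2)
    (hpos : 0 < s ⬝ᵥ y - α * τ * (y ⬝ᵥ y))
    (u : Fin d → ℝ)
    (hu : u = (Real.sqrt ((s - (α * τ) • y) ⬝ᵥ y))⁻¹ • (s - (α * τ) • y)) :
    u ⬝ᵥ u ≤ Lam / (lam ^ 2 * (1 - α)) - α * (2 - α) / ((1 - α) * Lam) :=
  stmt7_general α lam Lam hα0 hα1 hlam hlamLam s y hy τ hτ hτ1 hss u hu
end

section
/- Suppose Q : ℝ^d → ℝ is convex and H is a symmetric positive definite matrix with γ·I ⪯ H ⪯ Γ·I where 0 < γ ≤ Γ. Define the scaled proximal mapping prox_Q^H(x) = argmin_y { Q(y) + ½‖y − x‖²_H } where ‖z‖²_H = zᵀHz. Then for all x, y ∈ ℝ^d, ‖prox_Q^H(x) − prox_Q^H(y)‖ ≤ (Γ/γ)·‖x − y‖. -/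
/-!
Optimality of `p = prox_Q^H x` says that `H (x - p)` is a subgradient of `Q` at `p`. Monotonicity of
the subdifferential then makes the prox firmly nonexpansive in the `H`-geometry,
`‖p - q‖²_H ≤ ⟪x - y, p - q⟫_H`, hence `‖p - q‖_H ≤ ‖x - y‖_H`, and the spectral bounds give
`γ ‖p - q‖² ≤ Γ ‖x - y‖²`, i.e. the factor `√(Γ/γ) ≤ Γ/γ`.
-/

open Matrix Filter Topology

section

variable {n : Type*} [Fintype n]

theorem Matrix.IsSymm.dotProduct_mulVec_comm {H : Matrix n n ℝ} (hH : H.IsSymm) (a b : n → ℝ) :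
    a ⬝ᵥ (H *ᵥ b) = b ⬝ᵥ (H *ᵥ a) := by
  rw [dotProduct_mulVec, ← vecMul_transpose, hH.eq, dotProduct_comm]

theorem Matrix.IsSymm.add_dotProduct_mulVec_add {H : Matrix n n ℝ} (hH : H.IsSymm)
    (a b : n → ℝ) :
    (a + b) ⬝ᵥ (H *ᵥ (a + b)) = a ⬝ᵥ (H *ᵥ a) + 2 * (a ⬝ᵥ (H *ᵥ b)) + b ⬝ᵥ (H *ᵥ b) := by
  simp only [add_dotProduct, mulVec_add, dotProduct_add, hH.dotProduct_mulVec_comm b a]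
  ring

theorem Matrix.PosSemidef.dotProduct_mulVec_le_of_le {H : Matrix n n ℝ} (hH : H.PosSemidef)
    {a b : n → ℝ} (h : a ⬝ᵥ (H *ᵥ a) ≤ b ⬝ᵥ (H *ᵥ a)) :
    a ⬝ᵥ (H *ᵥ a) ≤ b ⬝ᵥ (H *ᵥ b) := by
  have hsymm : H.IsSymm := Matrix.isHermitian_iff_isSymm.mp hH.isHermitian
  have hnonneg : 0 ≤ (a - b) ⬝ᵥ (H *ᵥ (a - b)) := by
    simpa only [star_trivial] using hH.dotProduct_mulVec_nonneg (a - b)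
  have hexpand := hsymm.add_dotProduct_mulVec_add a (-b)
  simp only [← sub_eq_add_neg, mulVec_neg, dotProduct_neg, neg_dotProduct, neg_neg] at hexpand
  rw [hsymm.dotProduct_mulVec_comm a b] at hexpand
  linarith

theorem Matrix.PosSemidef.smul_dotProduct_le_dotProduct_mulVec {H : Matrix n n ℝ} [DecidableEq n]
    {γ : ℝ} (h : (H - γ • (1 : Matrix n n ℝ)).PosSemidef) (z : n → ℝ) :
    γ * (z ⬝ᵥ z) ≤ z ⬝ᵥ (H *ᵥ z) := by
  have := h.dotProduct_mulVec_nonneg z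
  simp only [star_trivial, sub_mulVec, dotProduct_sub, smul_mulVec, one_mulVec,
    dotProduct_smul, smul_eq_mul] at this
  linarith

theorem Matrix.PosSemidef.dotProduct_mulVec_le_smul_dotProduct {H : Matrix n n ℝ} [DecidableEq n]
    {Γ : ℝ} (h : (Γ • (1 : Matrix n n ℝ) - H).PosSemidef) (z : n → ℝ) :
    z ⬝ᵥ (H *ᵥ z) ≤ Γ * (z ⬝ᵥ z) := by
  have := h.dotProduct_mulVec_nonneg z
  simp only [star_trivial, sub_mulVec, dotProduct_sub, smul_mulVec, one_mulVec,
    dotProduct_smul, smul_eq_mul] at this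
  linarith

theorem nonneg_of_forall_mem_Ioc_nonneg_add_mul {a b : ℝ}
    (h : ∀ t ∈ Set.Ioc (0 : ℝ) 1, 0 ≤ a + t * b) : 0 ≤ a := by
  have hlim : Tendsto (fun t : ℝ => a + t * b) (𝓝[>] 0) (𝓝 a) := by
    have : Continuous (fun t : ℝ => a + t * b) := by fun_prop
    simpa using (this.tendsto 0).mono_left nhdsWithin_le_nhds
  exact ge_of_tendsto hlim (eventually_of_mem (Ioc_mem_nhdsGT zero_lt_one) h)

variable (Q : (n → ℝ) → ℝ) (H : Matrix n n ℝ)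

/-- `p = prox_Q^H x`. -/
def IsScaledProxPoint (x p : n → ℝ) : Prop :=
  ∀ z, Q p + (1 / 2) * ((p - x) ⬝ᵥ (H *ᵥ (p - x))) ≤ Q z + (1 / 2) * ((z - x) ⬝ᵥ (H *ᵥ (z - x)))

variable {Q H}

namespace IsScaledProxPoint

theorem dotProduct_mulVec_le_sub (hQ : ConvexOn ℝ Set.univ Q) (hH : H.IsSymm) {x p : n → ℝ}
    (hp : IsScaledProxPoint Q H x p) (z : n → ℝ) :
    (x - p) ⬝ᵥ (H *ᵥ (z - p)) ≤ Q z - Q p := by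
  -- compare `p` with `p + t • (z - p)` and let `t → 0⁺`
  rw [← sub_nonneg]
  refine nonneg_of_forall_mem_Ioc_nonneg_add_mul
    (b := (1 / 2) * ((z - p) ⬝ᵥ (H *ᵥ (z - p)))) fun t ⟨ht0, ht1⟩ => ?_
  have hconv : Q (p + t • (z - p)) ≤ (1 - t) * Q p + t * Q z := by
    have := hQ.2 (Set.mem_univ p) (Set.mem_univ z) (sub_nonneg.2 ht1) ht0.le (by ring)
    rwa [show (1 - t) • p + t • z = p + t • (z - p) by module] at this
  have hexpand := hH.add_dotProduct_mulVec_add (p - x) (t • (z - p))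
  rw [show p - x + t • (z - p) = p + t • (z - p) - x by abel] at hexpand
  simp only [smul_dotProduct, mulVec_smul, dotProduct_smul, smul_eq_mul] at hexpand
  have hmin := hp (p + t • (z - p))
  rw [show x - p = -(p - x) by abel, neg_dotProduct]
  refine nonneg_of_mul_nonneg_right ?_ ht0
  linarith

theorem dotProduct_mulVec_sub_le (hQ : ConvexOn ℝ Set.univ Q) (hH : H.IsSymm)
    {x y p q : n → ℝ} (hp : IsScaledProxPoint Q H x p) (hq : IsScaledProxPoint Q H y q) :
    (p - q) ⬝ᵥ (H *ᵥ (p - q)) ≤ (x - y) ⬝ᵥ (H *ᵥ (p - q)) := by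
  -- monotonicity of the subdifferential
  have hpq := hp.dotProduct_mulVec_le_sub hQ hH q
  have hqp := hq.dotProduct_mulVec_le_sub hQ hH p
  rw [show q - p = -(p - q) by abel, mulVec_neg, dotProduct_neg] at hpq
  have : (x - y) ⬝ᵥ (H *ᵥ (p - q)) - (p - q) ⬝ᵥ (H *ᵥ (p - q))
      = (x - p) ⬝ᵥ (H *ᵥ (p - q)) - (y - q) ⬝ᵥ (H *ᵥ (p - q)) := by
    rw [← sub_dotProduct, ← sub_dotProduct]; congr 1; abel
  linarith

theorem dotProduct_mulVec_le (hQ : ConvexOn ℝ Set.univ Q) (hH : H.PosSemidef)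
    {x y p q : n → ℝ} (hp : IsScaledProxPoint Q H x p) (hq : IsScaledProxPoint Q H y q) :
    (p - q) ⬝ᵥ (H *ᵥ (p - q)) ≤ (x - y) ⬝ᵥ (H *ᵥ (x - y)) :=
  hH.dotProduct_mulVec_le_of_le <|
    hp.dotProduct_mulVec_sub_le hQ (isHermitian_iff_isSymm.mp hH.isHermitian) hq

end IsScaledProxPoint

end

theorem stmt8_general {d : ℕ} (Q : (Fin d → ℝ) → ℝ) (hQ : ConvexOn ℝ Set.univ Q)
    (H : Matrix (Fin d) (Fin d) ℝ) (hpd : H.PosDef)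
    (γ Γ : ℝ) (hγ : 0 < γ) (hγΓ : γ ≤ Γ)
    (hlo : (H - γ • (1 : Matrix (Fin d) (Fin d) ℝ)).PosSemidef)
    (hhi : (Γ • (1 : Matrix (Fin d) (Fin d) ℝ) - H).PosSemidef)
    (prox : (Fin d → ℝ) → (Fin d → ℝ))
    (hprox : ∀ x z, Q (prox x) + (1 / 2) * ((prox x - x) ⬝ᵥ (H *ᵥ (prox x - x)))
        ≤ Q z + (1 / 2) * ((z - x) ⬝ᵥ (H *ᵥ (z - x))))
    (x y : Fin d → ℝ) :
    Real.sqrt ((prox x - prox y) ⬝ᵥ (prox x - prox y)) ≤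
      (Γ / γ) * Real.sqrt ((x - y) ⬝ᵥ (x - y)) := by
  set w := prox x - prox y
  set s := x - y
  have hquad : γ * (w ⬝ᵥ w) ≤ Γ * (s ⬝ᵥ s) :=
    calc γ * (w ⬝ᵥ w) ≤ w ⬝ᵥ (H *ᵥ w) := hlo.smul_dotProduct_le_dotProduct_mulVec w
      _ ≤ s ⬝ᵥ (H *ᵥ s) :=
        IsScaledProxPoint.dotProduct_mulVec_le hQ hpd.posSemidef (hprox x) (hprox y)
      _ ≤ Γ * (s ⬝ᵥ s) := hhi.dotProduct_mulVec_le_smul_dotProduct s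
  have hκ : 1 ≤ Γ / γ := (one_le_div hγ).2 hγΓ
  have hs : 0 ≤ s ⬝ᵥ s := dotProduct_self_star_nonneg s
  have hw : w ⬝ᵥ w ≤ (Γ / γ) ^ 2 * (s ⬝ᵥ s) := by
    calc w ⬝ᵥ w ≤ Γ / γ * (s ⬝ᵥ s) := by rw [div_mul_eq_mul_div, le_div_iff₀ hγ]; linarith
      _ ≤ (Γ / γ) ^ 2 * (s ⬝ᵥ s) := by gcongr; exact le_self_pow₀ hκ two_ne_zero
  calc Real.sqrt (w ⬝ᵥ w) ≤ Real.sqrt ((Γ / γ) ^ 2 * (s ⬝ᵥ s)) := Real.sqrt_le_sqrt hw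
    _ = (Γ / γ) * Real.sqrt (s ⬝ᵥ s) := by
      rw [Real.sqrt_mul (sq_nonneg _), Real.sqrt_sq (zero_le_one.trans hκ)]

/-- the scaled proximal mapping with γI ⪯ H ⪯ ΓI is
(Γ/γ)-Lipschitz in the Euclidean norm. -/
theorem stmt8 {d : ℕ} (Q : (Fin d → ℝ) → ℝ) (hQ : ConvexOn ℝ Set.univ Q)
    (H : Matrix (Fin d) (Fin d) ℝ) (hsym : H.IsSymm) (hpd : H.PosDef)
    (γ Γ : ℝ) (hγ : 0 < γ) (hγΓ : γ ≤ Γ)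
    (hlo : (H - γ • (1 : Matrix (Fin d) (Fin d) ℝ)).PosSemidef)
    (hhi : (Γ • (1 : Matrix (Fin d) (Fin d) ℝ) - H).PosSemidef)
    (prox : (Fin d → ℝ) → (Fin d → ℝ))
    (hprox : ∀ x z, Q (prox x) + (1 / 2) * ((prox x - x) ⬝ᵥ (H *ᵥ (prox x - x)))
        ≤ Q z + (1 / 2) * ((z - x) ⬝ᵥ (H *ᵥ (z - x))))
    (x y : Fin d → ℝ) :
    Real.sqrt ((prox x - prox y) ⬝ᵥ (prox x - prox y)) ≤
      (Γ / γ) * Real.sqrt ((x - y) ⬝ᵥ (x - y)) :=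
  stmt8_general Q hQ H hpd γ Γ hγ hγΓ hlo hhi prox hprox x y
end
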